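/- arXiv:2206.08858 — 4 statements merged into one kernel-verified Lean document; each statement's English description precedes it below -/
import Mathlib

section
/- The Steinhaus transform of a metric is a metric: for any metric d on S and fixed c ∈ S, the function d̄(x,y) = 2d(x,y)/(d(x,c)+d(y,c)+d(x,y)) (taken to be 0 when x = y) satisfies the identity of indiscernibles, symmetry, and the triangle inequality. -/
/-!
For `t ≥ 0` the map `t ↦ t / (k + t)` is monotone, so `d̄(x,z)` is bounded by the same
expression with `d(x,z)` replaced by `d(x,y) + d(y,z)`. Splitting that fraction into two,
each piece has a denominator at least as large as that of `d̄(x,y)` (resp. `d̄(y,z)`), by the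
triangle inequality through `c`.
-/

/-- The Steinhaus (biotope) transform of the metric `dist` with respect to a
reference point `c`.  (In Lean, division by zero yields `0`, so `steinhaus c x x = 0`
automatically, matching the convention `d̄(x,x) = 0`.) -/
noncomputable def steinhaus {S : Type*} [MetricSpace S] (c x y : S) : ℝ :=
  2 * dist x y / (dist x c + dist y c + dist x y)

lemma div_add_self_le_div_add_self {k s t : ℝ} (hk : 0 ≤ k) (hs : 0 ≤ s) (hst : s ≤ t) :
    s / (k + s) ≤ t / (k + t) := by
  rcases (add_nonneg hk hs).eq_or_lt with h | h
  · rw [← h, div_zero]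
    exact div_nonneg (hs.trans hst) (by linarith)
  · rw [div_le_div_iff₀ h (by linarith)]
    nlinarith

namespace steinhaus

variable {S : Type*} [MetricSpace S] (c : S)

lemma eq_zero_iff (x y : S) : steinhaus c x y = 0 ↔ x = y := by
  have hc : 0 ≤ dist x c + dist y c := by positivity
  rw [← dist_eq_zero (x := x), steinhaus, div_eq_zero_iff, mul_eq_zero]
  constructor
  · rintro ((h | h) | h)
    · norm_num at h
    · exact h
    · linarith [dist_nonneg (x := x) (y := y)]
  · exact fun h => Or.inl (Or.inr h)

lemma comm (x y : S) : steinhaus c x y = steinhaus c y x := by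
  rw [steinhaus, steinhaus, dist_comm x y]
  ring

lemma two_mul_dist_div_le {x y : S} {D : ℝ} (hD : dist x c + dist y c + dist x y ≤ D) :
    2 * dist x y / D ≤ steinhaus c x y := by
  rcases (dist_nonneg : 0 ≤ dist x y).eq_or_lt with h | h
  · rw [← h, mul_zero, zero_div, steinhaus, ← h, mul_zero, zero_div]
  · exact div_le_div_of_nonneg_left (by positivity) (by positivity) hD

lemma triangle (x y z : S) : steinhaus c x z ≤ steinhaus c x y + steinhaus c y z := by
  have hmono : dist x z / (dist x c + dist z c + dist x z) ≤
      (dist x y + dist y z) / (dist x c + dist z c + (dist x y + dist y z)) :=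
    div_add_self_le_div_add_self (by positivity) dist_nonneg (dist_triangle x y z)
  set D := dist x c + dist z c + (dist x y + dist y z)
  calc steinhaus c x z = 2 * (dist x z / (dist x c + dist z c + dist x z)) := mul_div_assoc ..
    _ ≤ 2 * ((dist x y + dist y z) / D) := by gcongr
    _ = 2 * dist x y / D + 2 * dist y z / D := by ring
    _ ≤ steinhaus c x y + steinhaus c y z := by
      gcongr
      · exact two_mul_dist_div_le c (by linarith [dist_triangle y z c])
      · exact two_mul_dist_div_le c (by linarith [dist_triangle y x c, dist_comm x y])

end steinhaus

/-- The Steinhaus transform of a metric is a metric: it satisfies the identity of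
indiscernibles, symmetry, and the triangle inequality. -/
theorem steinhaus_is_metric {S : Type*} [MetricSpace S] (c : S) :
    (∀ x y : S, steinhaus c x y = 0 ↔ x = y) ∧
    (∀ x y : S, steinhaus c x y = steinhaus c y x) ∧
    (∀ x y z : S, steinhaus c x z ≤ steinhaus c x y + steinhaus c y z) :=
  ⟨steinhaus.eq_zero_iff c, steinhaus.comm c, steinhaus.triangle c⟩
end

section
/- The matching distance satisfies the triangle inequality: d_M(X,Y) ≤ d_M(X,Z) + d_M(Z,Y) for all finite multisets X, Y, Z over a metric space. -/
/-- `M` is a matching of the multisets `A` and `B`: a multiset of pairs `(x, y)` with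
`x ∈ A`, `y ∈ B`, using each element of `A` and of `B` at most once, counting
multiplicity. -/
def IsMatching {α : Type*} (A B : Multiset α) (M : Multiset (α × α)) : Prop :=
  M.map Prod.fst ≤ A ∧ M.map Prod.snd ≤ B

/-- Cost of a matching `M` of `A` and `B`: sum of pairwise distances of matched
elements plus penalties `d(·, Λ)` for unmatched elements. -/
noncomputable def matchingCost {α : Type*} [MetricSpace α] [DecidableEq α] (Λ : α)
    (A B : Multiset α) (M : Multiset (α × α)) : ℝ :=
  (M.map fun p => dist p.1 p.2).sum
    + ((A - M.map Prod.fst).map fun x => dist x Λ).sum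
    + ((B - M.map Prod.snd).map fun y => dist y Λ).sum

/-- The matching distance `d_M`: the minimal cost over all matchings. -/
noncomputable def dMatch {α : Type*} [MetricSpace α] [DecidableEq α] (Λ : α) (A B : Multiset α) : ℝ :=
  sInf {c | ∃ M, IsMatching A B M ∧ c = matchingCost Λ A B M}

/-!
Two matchings `A ~ C` and `C ~ B` compose to a matching `A ~ B`: an element `a` matched to `c`
which is in turn matched to `b` gets matched to `b`, and every other element of `A` or `B` is left
unmatched. The triangle inequality for `d`, applied to `a, c, b` or to `a, c, Λ` (resp. `b, c, Λ`),
bounds the cost of each pair or penalty of the composite by the costs it replaces.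
-/

namespace Multiset

variable {α : Type*} [DecidableEq α] {s t : Multiset α} {a : α}

theorem cons_le_iff_mem_and_le_erase : a ::ₘ s ≤ t ↔ a ∈ t ∧ s ≤ t.erase a := by
  refine ⟨fun h => ⟨mem_of_le h (mem_cons_self a s), ?_⟩, fun ⟨ha, hs⟩ => ?_⟩
  · simpa using erase_le_erase a h
  · exact (cons_le_cons a hs).trans (cons_erase ha).le

theorem le_erase_of_le_of_notMem (h : s ≤ t) (ha : a ∉ s) : s ≤ t.erase a :=
  (le_cons_of_notMem ha).1 (h.trans (le_cons_erase t a))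

end Multiset

open Multiset

section Matching

variable {α : Type*} {A B : Multiset α} {M : Multiset (α × α)}

theorem isMatching_zero (A B : Multiset α) : IsMatching A B 0 := by
  simp [IsMatching]

variable [DecidableEq α]

theorem isMatching_cons_iff {a b : α} :
    IsMatching A B ((a, b) ::ₘ M) ↔ a ∈ A ∧ b ∈ B ∧ IsMatching (A.erase a) (B.erase b) M := by
  simp only [IsMatching, map_cons, cons_le_iff_mem_and_le_erase]
  tauto

end Matching

section Cost

variable {α : Type*} [MetricSpace α] (Λ : α)

theorem sum_map_dist_nonneg (s : Multiset α) : 0 ≤ (s.map fun x => dist x Λ).sum :=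
  sum_nonneg fun _ hx => by
    obtain ⟨x, -, rfl⟩ := mem_map.1 hx
    exact dist_nonneg

variable [DecidableEq α] {A B : Multiset α} {M : Multiset (α × α)}

theorem matchingCost_nonneg (A B : Multiset α) (M : Multiset (α × α)) :
    0 ≤ matchingCost Λ A B M := by
  have hM : 0 ≤ (M.map fun p => dist p.1 p.2).sum := sum_nonneg fun _ hx => by
    obtain ⟨p, -, rfl⟩ := mem_map.1 hx
    exact dist_nonneg
  have := sum_map_dist_nonneg Λ (A - M.map Prod.fst)
  have := sum_map_dist_nonneg Λ (B - M.map Prod.snd)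
  unfold matchingCost
  linarith

theorem matchingCost_zero (A B : Multiset α) :
    matchingCost Λ A B 0 = (A.map fun x => dist x Λ).sum + (B.map fun y => dist y Λ).sum := by
  simp [matchingCost]

theorem matchingCost_cons (A B : Multiset α) (M : Multiset (α × α)) (a b : α) :
    matchingCost Λ A B ((a, b) ::ₘ M) = dist a b + matchingCost Λ (A.erase a) (B.erase b) M := by
  simp only [matchingCost, map_cons, sum_cons, sub_cons]
  ring

theorem matchingCost_eq_dist_add_erase_left {a : α} (ha : a ∈ A)
    (hM : M.map Prod.fst ≤ A.erase a) :
    matchingCost Λ A B M = dist a Λ + matchingCost Λ (A.erase a) B M := by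
  simp only [matchingCost]
  conv_lhs => rw [← cons_erase ha, cons_sub_of_le _ hM, map_cons, sum_cons]
  ring

theorem sum_map_dist_le_add_matchingCost {C : Multiset α} (hM : IsMatching C B M) :
    (B.map fun y => dist y Λ).sum ≤ (C.map fun x => dist x Λ).sum + matchingCost Λ C B M := by
  induction M using Multiset.induction generalizing C B with
  | empty =>
    rw [matchingCost_zero]
    linarith [sum_map_dist_nonneg Λ C]
  | cons p M ih =>
    obtain ⟨c, b⟩ := p
    obtain ⟨hc, hb, hM⟩ := isMatching_cons_iff.1 hM
    rw [matchingCost_cons, ← sum_map_erase hb, ← sum_map_erase hc]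
    linarith [ih hM, dist_triangle_left b Λ c]

theorem exists_isMatching_matchingCost_le_add {C : Multiset α} {M₁ M₂ : Multiset (α × α)}
    (hM₁ : IsMatching A C M₁) (hM₂ : IsMatching C B M₂) :
    ∃ N, IsMatching A B N ∧
      matchingCost Λ A B N ≤ matchingCost Λ A C M₁ + matchingCost Λ C B M₂ := by
  induction M₁ using Multiset.induction generalizing A B C M₂ with
  | empty =>
    refine ⟨0, isMatching_zero A B, ?_⟩
    simp only [matchingCost_zero]
    linarith [sum_map_dist_le_add_matchingCost Λ hM₂, sum_map_dist_nonneg Λ C]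
  | cons p M₁ ih =>
    obtain ⟨a, c⟩ := p
    obtain ⟨ha, hc, hM₁⟩ := isMatching_cons_iff.1 hM₁
    rw [matchingCost_cons]
    by_cases hcM₂ : c ∈ M₂.map Prod.fst
    · obtain ⟨⟨c', b⟩, hcb, rfl⟩ := mem_map.1 hcM₂
      rw [← cons_erase hcb] at hM₂ ⊢
      obtain ⟨-, hb, hM₂⟩ := isMatching_cons_iff.1 hM₂
      obtain ⟨N, hN, hcost⟩ := ih hM₁ hM₂
      refine ⟨(a, b) ::ₘ N, isMatching_cons_iff.2 ⟨ha, hb, hN⟩, ?_⟩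
      rw [matchingCost_cons, matchingCost_cons]
      linarith [dist_triangle a c' b]
    · have hM₂' : M₂.map Prod.fst ≤ C.erase c := le_erase_of_le_of_notMem hM₂.1 hcM₂
      obtain ⟨N, hN, hcost⟩ := ih hM₁ ⟨hM₂', hM₂.2⟩
      refine ⟨N, ⟨hN.1.trans (erase_le a A), hN.2⟩, ?_⟩
      rw [matchingCost_eq_dist_add_erase_left Λ ha hN.1,
        matchingCost_eq_dist_add_erase_left Λ hc hM₂']
      linarith [dist_triangle a c Λ]

theorem dMatch_le_matchingCost (hM : IsMatching A B M) : dMatch Λ A B ≤ matchingCost Λ A B M :=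
  csInf_le ⟨0, by rintro _ ⟨M, -, rfl⟩; exact matchingCost_nonneg Λ A B M⟩ ⟨M, hM, rfl⟩

theorem le_dMatch {r : ℝ} (h : ∀ M, IsMatching A B M → r ≤ matchingCost Λ A B M) :
    r ≤ dMatch Λ A B :=
  le_csInf ⟨_, 0, isMatching_zero A B, rfl⟩ (by rintro _ ⟨M, hM, rfl⟩; exact h M hM)

end Cost

/-- The matching distance satisfies the triangle inequality. -/
theorem dMatch_triangle {α : Type*} [MetricSpace α] [DecidableEq α] (Λ : α) (A B C : Multiset α) :
    dMatch Λ A B ≤ dMatch Λ A C + dMatch Λ C B := by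
  have hcompose : ∀ M₁ M₂, IsMatching A C M₁ → IsMatching C B M₂ →
      dMatch Λ A B ≤ matchingCost Λ A C M₁ + matchingCost Λ C B M₂ := by
    intro M₁ M₂ hM₁ hM₂
    obtain ⟨N, hN, hcost⟩ := exists_isMatching_matchingCost_le_add Λ hM₁ hM₂
    exact (dMatch_le_matchingCost Λ hN).trans hcost
  have hAC : dMatch Λ A B - dMatch Λ C B ≤ dMatch Λ A C :=
    le_dMatch Λ fun M₁ hM₁ => sub_le_comm.1 <| le_dMatch Λ fun M₂ hM₂ =>
      sub_le_iff_le_add'.2 (hcompose M₁ M₂ hM₁ hM₂)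
  linarith
end

section
/- The edit distance d_E between finite sequences over a metric space satisfies the triangle inequality: d_E(X,Y) ≤ d_E(X,Z) + d_E(Z,Y), where the key step is that monotone matchings compose: if M₁ is a monotone matching of X and Z and M₂ is a monotone matching of Z and Y, then M₃ = {(x_i, y_j) : (x_i, z_k) ∈ M₁ and (z_k, y_j) ∈ M₂ for some k} is a monotone matching of X and Y. -/
open Finset

/-- `S` is a matching between sequences of lengths `N` and `M`: a finite set of index
pairs `(i, j)` (0-indexed, `i < N`, `j < M`) in which each index of either sequence
appears at most once. -/
def IsSeqMatching (N M : ℕ) (S : Finset (ℕ × ℕ)) : Prop :=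
  (∀ p ∈ S, p.1 < N ∧ p.2 < M) ∧
  (∀ p ∈ S, ∀ q ∈ S, p.1 = q.1 → p = q) ∧
  (∀ p ∈ S, ∀ q ∈ S, p.2 = q.2 → p = q)

/-- A matching is monotone if it preserves the order of both sequences:
`i₁ < i₂ ⟺ j₁ < j₂` for any two pairs `(i₁,j₁)`, `(i₂,j₂)` in it. -/
def IsMonotoneMatching (S : Finset (ℕ × ℕ)) : Prop :=
  ∀ p ∈ S, ∀ q ∈ S, (p.1 < q.1 ↔ p.2 < q.2)

/-- Cost of a monotone matching for the edit distance: pairwise distances of matched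
entries plus penalties `d(·, Λ)` for unmatched entries. -/
noncomputable def editCost {α : Type*} [MetricSpace α] (Λ : α) (X Y : List α)
    (S : Finset (ℕ × ℕ)) : ℝ :=
  (∑ p ∈ S, dist (X.getD p.1 Λ) (Y.getD p.2 Λ))
    + (∑ i ∈ (Finset.range X.length).filter (fun i => ∀ p ∈ S, p.1 ≠ i),
        dist (X.getD i Λ) Λ)
    + (∑ j ∈ (Finset.range Y.length).filter (fun j => ∀ p ∈ S, p.2 ≠ j),
        dist (Y.getD j Λ) Λ)

/-- The edit distance `d_E`: minimal cost over monotone matchings. -/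
noncomputable def dEdit {α : Type*} [MetricSpace α] (Λ : α) (X Y : List α) : ℝ :=
  sInf {c | ∃ S, IsSeqMatching X.length Y.length S ∧ IsMonotoneMatching S ∧
    c = editCost Λ X Y S}

/-!
Composing a matching of `X` with `Z` and one of `Z` with `Y` through `Z` gives a monotone
matching of `X` with `Y`. To compare costs, write the cost of a matching as the cost of deleting
both sequences minus the savings `d(x,Λ) + d(y,Λ) - d(x,y)` of its pairs. Each index `k` of `Z` is
matched at most once on either side, so the inequality between savings splits over `k`; for each
`k` it is the triangle inequality through `z_k`, between `x` and `y` when `k` is matched on both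
sides, and between `x` (or `y`) and `Λ` when it is matched on one side only.
-/

namespace Finset

lemma sum_add_sum_le_add_sum_sum {β γ R : Type*} [AddCommMonoid R] [PartialOrder R]
    [IsOrderedAddMonoid R] {A : Finset β} {B : Finset γ} (hA : #A ≤ 1) (hB : #B ≤ 1)
    {f : β → R} {g : γ → R} {h : β → γ → R} {c : R} (hc : 0 ≤ c)
    (hf : ∀ a ∈ A, f a ≤ c) (hg : ∀ b ∈ B, g b ≤ c)
    (hfg : ∀ a ∈ A, ∀ b ∈ B, f a + g b ≤ c + h a b) :
    ∑ a ∈ A, f a + ∑ b ∈ B, g b ≤ c + ∑ a ∈ A, ∑ b ∈ B, h a b := by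
  rcases Nat.le_one_iff_eq_zero_or_eq_one.1 hA with hA | hA <;>
    rcases Nat.le_one_iff_eq_zero_or_eq_one.1 hB with hB | hB
  · simp_all
  · obtain ⟨b, rfl⟩ := card_eq_one.1 hB
    simp_all
  · obtain ⟨a, rfl⟩ := card_eq_one.1 hA
    simp_all
  · obtain ⟨a, rfl⟩ := card_eq_one.1 hA
    obtain ⟨b, rfl⟩ := card_eq_one.1 hB
    simp_all

lemma sum_filter_forall_ne_add_sum {ι M : Type*} [AddCommMonoid M] {S : Finset ι} {π : ι → ℕ}
    {N : ℕ} (hinj : Set.InjOn π S) (hlt : ∀ s ∈ S, π s < N) (f : ℕ → M) :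
    ∑ i ∈ (range N).filter (fun i => ∀ s ∈ S, π s ≠ i), f i + ∑ s ∈ S, f (π s) =
      ∑ i ∈ range N, f i := by
  have hcompl : (range N).filter (fun i => ∀ s ∈ S, π s ≠ i) = range N \ S.image π := by
    ext i
    simp
  rw [hcompl, ← sum_image hinj]
  exact sum_sdiff (image_subset_iff.2 fun s hs => mem_range.2 (hlt s hs))

end Finset

def matchingComp (S₁ S₂ : Finset (ℕ × ℕ)) : Finset (ℕ × ℕ) :=
  ((S₁ ×ˢ S₂).filter fun t => t.1.2 = t.2.1).image fun t => (t.1.1, t.2.2)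

lemma mem_matchingComp {S₁ S₂ : Finset (ℕ × ℕ)} {p : ℕ × ℕ} :
    p ∈ matchingComp S₁ S₂ ↔ ∃ k, (p.1, k) ∈ S₁ ∧ (k, p.2) ∈ S₂ := by
  constructor
  · intro hp
    obtain ⟨⟨⟨i, k⟩, ⟨k', j⟩⟩, ht, rfl⟩ := mem_image.1 hp
    obtain ⟨⟨h₁, h₂⟩, rfl : k = k'⟩ := by simpa only [mem_filter, mem_product] using ht
    exact ⟨k, h₁, h₂⟩
  · rintro ⟨k, h₁, h₂⟩
    exact mem_image.2 ⟨((p.1, k), (k, p.2)), mem_filter.2 ⟨mem_product.2 ⟨h₁, h₂⟩, rfl⟩, rfl⟩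

lemma IsSeqMatching.comp {N K M : ℕ} {S₁ S₂ : Finset (ℕ × ℕ)} (h₁ : IsSeqMatching N K S₁)
    (h₂ : IsSeqMatching K M S₂) : IsSeqMatching N M (matchingComp S₁ S₂) := by
  obtain ⟨hlt₁, hfst₁, hsnd₁⟩ := h₁
  obtain ⟨hlt₂, hfst₂, hsnd₂⟩ := h₂
  refine ⟨fun p hp => ?_, fun p hp q hq hpq => ?_, fun p hp q hq hpq => ?_⟩ <;>
    obtain ⟨k, hp₁, hp₂⟩ := mem_matchingComp.1 hp
  · exact ⟨(hlt₁ _ hp₁).1, (hlt₂ _ hp₂).2⟩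
  all_goals obtain ⟨l, hq₁, hq₂⟩ := mem_matchingComp.1 hq
  · have hkl : k = l := congrArg Prod.snd (hfst₁ _ hp₁ _ hq₁ hpq)
    subst hkl
    exact Prod.ext hpq (Prod.ext_iff.1 (hfst₂ _ hp₂ _ hq₂ rfl)).2
  · have hkl : k = l := congrArg Prod.fst (hsnd₂ _ hp₂ _ hq₂ hpq)
    subst hkl
    exact Prod.ext (Prod.ext_iff.1 (hsnd₁ _ hp₁ _ hq₁ rfl)).1 hpq

lemma IsMonotoneMatching.comp {S₁ S₂ : Finset (ℕ × ℕ)} (m₁ : IsMonotoneMatching S₁)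
    (m₂ : IsMonotoneMatching S₂) : IsMonotoneMatching (matchingComp S₁ S₂) := by
  intro p hp q hq
  obtain ⟨k, hp₁, hp₂⟩ := mem_matchingComp.1 hp
  obtain ⟨l, hq₁, hq₂⟩ := mem_matchingComp.1 hq
  exact (m₁ _ hp₁ _ hq₁).trans (m₂ _ hp₂ _ hq₂)

lemma sum_matchingComp {M : Type*} [AddCommMonoid M] {N K L : ℕ} {S₁ S₂ : Finset (ℕ × ℕ)}
    (h₁ : IsSeqMatching N K S₁) (h₂ : IsSeqMatching K L S₂) (F : ℕ × ℕ → M) :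
    ∑ p ∈ matchingComp S₁ S₂, F p = ∑ p ∈ S₁, ∑ q ∈ S₂ with q.1 = p.2, F (p.1, q.2) := by
  have hinj : Set.InjOn (fun t : (ℕ × ℕ) × (ℕ × ℕ) => (t.1.1, t.2.2))
      ((S₁ ×ˢ S₂).filter fun t => t.1.2 = t.2.1) := by
    rintro ⟨p, q⟩ ht ⟨p', q'⟩ ht' he
    simp only [coe_filter, mem_product, Set.mem_ofPred_eq, Prod.mk.injEq] at ht ht' he
    have hp : p = p' := h₁.2.1 _ ht.1.1 _ ht'.1.1 he.1
    subst hp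
    exact Prod.ext rfl (h₂.2.1 _ ht.1.2 _ ht'.1.2 (ht.2.symm.trans ht'.2))
  rw [matchingComp, sum_image hinj, sum_filter, sum_product]
  exact sum_congr rfl fun p _ => by simp only [sum_filter, eq_comm]

section EditDistance

variable {α : Type*} [MetricSpace α] (Λ : α)

def editSaving (x y : α) : ℝ :=
  dist x Λ + dist y Λ - dist x y

def deletionCost (X : List α) : ℝ :=
  ∑ i ∈ range X.length, dist (X.getD i Λ) Λ

lemma editSaving_le_two_mul_dist_right (x z : α) : editSaving Λ x z ≤ 2 * dist z Λ := by
  have := dist_triangle x z Λ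
  unfold editSaving
  linarith

lemma editSaving_le_two_mul_dist_left (z y : α) : editSaving Λ z y ≤ 2 * dist z Λ := by
  have := dist_triangle_left y Λ z
  unfold editSaving
  linarith

lemma editSaving_add_editSaving_le (x z y : α) :
    editSaving Λ x z + editSaving Λ z y ≤ 2 * dist z Λ + editSaving Λ x y := by
  have := dist_triangle x z y
  unfold editSaving
  linarith

lemma editCost_eq_deletionCost_sub {X Y : List α} {S : Finset (ℕ × ℕ)}
    (h : IsSeqMatching X.length Y.length S) :
    editCost Λ X Y S = deletionCost Λ X + deletionCost Λ Y -
      ∑ p ∈ S, editSaving Λ (X.getD p.1 Λ) (Y.getD p.2 Λ) := by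
  have hX := sum_filter_forall_ne_add_sum (π := Prod.fst) (fun p hp q hq => h.2.1 p hp q hq)
    (fun p hp => (h.1 p hp).1) (fun i => dist (X.getD i Λ) Λ)
  have hY := sum_filter_forall_ne_add_sum (π := Prod.snd) (fun p hp q hq => h.2.2 p hp q hq)
    (fun p hp => (h.1 p hp).2) (fun j => dist (Y.getD j Λ) Λ)
  simp only [editCost, deletionCost, editSaving, sum_sub_distrib, sum_add_distrib] at hX hY ⊢
  linarith

lemma sum_editSaving_le_matchingComp {X Y Z : List α} {S₁ S₂ : Finset (ℕ × ℕ)}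
    (h₁ : IsSeqMatching X.length Z.length S₁) (h₂ : IsSeqMatching Z.length Y.length S₂) :
    ∑ p ∈ S₁, editSaving Λ (X.getD p.1 Λ) (Z.getD p.2 Λ) +
        ∑ q ∈ S₂, editSaving Λ (Z.getD q.1 Λ) (Y.getD q.2 Λ) ≤
      2 * deletionCost Λ Z +
        ∑ p ∈ matchingComp S₁ S₂, editSaving Λ (X.getD p.1 Λ) (Y.getD p.2 Λ) := by
  have fiber₁ (F : ℕ × ℕ → ℝ) :
      ∑ p ∈ S₁, F p = ∑ k ∈ range Z.length, ∑ p ∈ S₁ with p.2 = k, F p :=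
    (sum_fiberwise_of_maps_to (fun p hp => mem_range.2 (h₁.1 p hp).2) F).symm
  have fiber₂ (F : ℕ × ℕ → ℝ) :
      ∑ q ∈ S₂, F q = ∑ k ∈ range Z.length, ∑ q ∈ S₂ with q.1 = k, F q :=
    (sum_fiberwise_of_maps_to (fun q hq => mem_range.2 (h₂.1 q hq).1) F).symm
  rw [sum_matchingComp h₁ h₂, fiber₁, fiber₁, fiber₂, deletionCost, mul_sum,
    ← sum_add_distrib, ← sum_add_distrib]
  refine sum_le_sum fun k _ => ?_
  have card₁ : #{p ∈ S₁ | p.2 = k} ≤ 1 := card_le_one.2 fun p hp q hq =>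
    h₁.2.2 p (mem_filter.1 hp).1 q (mem_filter.1 hq).1
      ((mem_filter.1 hp).2.trans (mem_filter.1 hq).2.symm)
  have card₂ : #{q ∈ S₂ | q.1 = k} ≤ 1 := card_le_one.2 fun p hp q hq =>
    h₂.2.1 p (mem_filter.1 hp).1 q (mem_filter.1 hq).1
      ((mem_filter.1 hp).2.trans (mem_filter.1 hq).2.symm)
  calc _ ≤ 2 * dist (Z.getD k Λ) Λ + ∑ p ∈ S₁ with p.2 = k, ∑ q ∈ S₂ with q.1 = k,
          editSaving Λ (X.getD p.1 Λ) (Y.getD q.2 Λ) := by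
        refine sum_add_sum_le_add_sum_sum card₁ card₂ (by positivity) ?_ ?_ ?_
        · rintro p hp
          obtain ⟨-, rfl⟩ := mem_filter.1 hp
          exact editSaving_le_two_mul_dist_right Λ _ _
        · rintro q hq
          obtain ⟨-, rfl⟩ := mem_filter.1 hq
          exact editSaving_le_two_mul_dist_left Λ _ _
        · rintro p hp q hq
          obtain ⟨-, rfl⟩ := mem_filter.1 hp
          obtain ⟨-, hq⟩ := mem_filter.1 hq
          rw [← hq]
          exact editSaving_add_editSaving_le Λ _ _ _
    _ = _ := by
        congr 1
        exact sum_congr rfl fun p hp => by rw [(mem_filter.1 hp).2]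

lemma editCost_matchingComp_le {X Y Z : List α} {S₁ S₂ : Finset (ℕ × ℕ)}
    (h₁ : IsSeqMatching X.length Z.length S₁) (h₂ : IsSeqMatching Z.length Y.length S₂) :
    editCost Λ X Y (matchingComp S₁ S₂) ≤ editCost Λ X Z S₁ + editCost Λ Z Y S₂ := by
  rw [editCost_eq_deletionCost_sub Λ h₁, editCost_eq_deletionCost_sub Λ h₂,
    editCost_eq_deletionCost_sub Λ (h₁.comp h₂)]
  linarith [sum_editSaving_le_matchingComp Λ h₁ h₂]

lemma dEdit_le_editCost {X Y : List α} {S : Finset (ℕ × ℕ)}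
    (h : IsSeqMatching X.length Y.length S) (hm : IsMonotoneMatching S) :
    dEdit Λ X Y ≤ editCost Λ X Y S :=
  csInf_le ⟨0, by rintro _ ⟨S, -, -, rfl⟩; unfold editCost; positivity⟩ ⟨S, h, hm, rfl⟩

lemma le_dEdit {X Y : List α} {c : ℝ}
    (hc : ∀ S, IsSeqMatching X.length Y.length S → IsMonotoneMatching S → c ≤ editCost Λ X Y S) :
    c ≤ dEdit Λ X Y := by
  refine le_csInf ⟨_, ∅, ?_, ?_, rfl⟩ ?_
  · simp [IsSeqMatching]
  · simp [IsMonotoneMatching]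
  · rintro _ ⟨S, h, hm, rfl⟩
    exact hc S h hm

end EditDistance

/-- The edit distance between sequences satisfies the triangle inequality. -/
theorem dEdit_triangle {α : Type*} [MetricSpace α] (Λ : α) (X Y Z : List α) :
    dEdit Λ X Y ≤ dEdit Λ X Z + dEdit Λ Z Y := by
  have hcomp : ∀ S₁, IsSeqMatching X.length Z.length S₁ → IsMonotoneMatching S₁ →
      ∀ S₂, IsSeqMatching Z.length Y.length S₂ → IsMonotoneMatching S₂ →
        dEdit Λ X Y ≤ editCost Λ X Z S₁ + editCost Λ Z Y S₂ :=
    fun S₁ h₁ m₁ S₂ h₂ m₂ =>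
      (dEdit_le_editCost Λ (h₁.comp h₂) (m₁.comp m₂)).trans (editCost_matchingComp_le Λ h₁ h₂)
  have : dEdit Λ X Y - dEdit Λ Z Y ≤ dEdit Λ X Z := le_dEdit Λ fun S₁ h₁ m₁ =>
    sub_le_comm.1 <| le_dEdit Λ fun S₂ h₂ m₂ => sub_le_iff_le_add'.2 (hcomp S₁ h₁ m₁ S₂ h₂ m₂)
  linarith
end

section
/- The fixed-penalty dynamic time warping distance d_{DTW,ρ} with ρ > 0 satisfies the identity of indiscernibles: d_{DTW,ρ}(X,Y) = 0 if and only if the sequences X and Y are equal. -/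
/-- `C` is a coupling of sequences of lengths `N` and `M` (0-indexed): a list of
index pairs starting at `(0,0)`, ending at `(N-1, M-1)`, with each step increasing
one or both indices by 1. -/
def IsCoupling (N M : ℕ) (C : List (ℕ × ℕ)) : Prop :=
  C.head? = some (0, 0) ∧ C.getLast? = some (N - 1, M - 1) ∧
  (∀ p ∈ C, p.1 < N ∧ p.2 < M) ∧
  C.Chain' (fun p q => q = (p.1 + 1, p.2) ∨ q = (p.1, p.2 + 1) ∨ q = (p.1 + 1, p.2 + 1))

/-- The dynamic time warping distance `d_DTW`: the minimum over couplings of the sum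
of distances of coupled entries. -/
noncomputable def dDTW {α : Type*} [MetricSpace α] [Inhabited α] (X Y : List α) : ℝ :=
  sInf {c | ∃ C, IsCoupling X.length Y.length C ∧
    c = (C.map fun p => dist (X.getI p.1) (Y.getI p.2)).sum}

/-- The amount of warping in a coupling: the number of pairs `(i,j) ∈ C` such that
`(i, j+1) ∈ C` or `(i+1, j) ∈ C`. -/
def warpCount (C : List (ℕ × ℕ)) : ℕ :=
  C.countP fun p => decide ((p.1, p.2 + 1) ∈ C ∨ (p.1 + 1, p.2) ∈ C)

/-- The fixed-penalty DTW distance `d_{DTW,ρ}`: the minimum over couplings of the sum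
of distances of coupled entries plus `ρ` per instance of warping. -/
noncomputable def dFPDTW {α : Type*} [MetricSpace α] [Inhabited α] (ρ : ℝ)
    (X Y : List α) : ℝ :=
  sInf {c | ∃ C, IsCoupling X.length Y.length C ∧
    c = (C.map fun p => dist (X.getI p.1) (Y.getI p.2)).sum + ρ * (warpCount C : ℝ)}

/-! A coupling without warping can only step diagonally, so it exists only when `|X| = |Y|` and is
then the diagonal `(0,0), (1,1), …`. Hence if `X ≠ Y`, every coupling either warps, costing at
least `ρ`, or is the diagonal of two sequences of equal length differing at some index `k`,
costing at least `d(x_k, y_k)`: the infimum is bounded below by a positive constant. Conversely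
the diagonal coupling of `X` with itself costs `0`. -/

namespace IsCoupling

variable {N M : ℕ} {C : List (ℕ × ℕ)}

theorem concat (hC : IsCoupling (N + 1) (M + 1) C) {q : ℕ × ℕ}
    (hq : q = (N + 1, M) ∨ q = (N, M + 1) ∨ q = (N + 1, M + 1)) :
    IsCoupling (q.1 + 1) (q.2 + 1) (C ++ [q]) := by
  obtain ⟨hhead, hlast, hbound, hchain⟩ := hC
  have hne : C ≠ [] := by rintro rfl; simp at hhead
  refine ⟨by simp [List.head?_append, hhead], by simp, ?_, ?_⟩
  · have : N ≤ q.1 ∧ M ≤ q.2 := by rcases hq with rfl | rfl | rfl <;> simp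
    simp only [List.mem_append, List.mem_singleton]
    rintro p (hp | rfl)
    · have := hbound p hp; omega
    · omega
  · refine hchain.append (.singleton q) ?_
    simp only [hlast, Option.mem_def, Option.some_inj, List.head?_singleton]
    rintro _ rfl _ rfl
    simpa using hq

end IsCoupling

theorem exists_isCoupling : ∀ N M : ℕ, ∃ C, IsCoupling (N + 1) (M + 1) C
  | 0, 0 => ⟨[(0, 0)], rfl, rfl, by simp, .singleton _⟩
  | 0, M + 1 =>
    have ⟨_, hC⟩ := exists_isCoupling 0 M
    ⟨_, hC.concat (Or.inr (Or.inl rfl))⟩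
  | N + 1, M =>
    have ⟨_, hC⟩ := exists_isCoupling N M
    ⟨_, hC.concat (Or.inl rfl)⟩

def diagonalCoupling (N : ℕ) : List (ℕ × ℕ) :=
  (List.range N).map fun i => (i, i)

theorem mem_diagonalCoupling {N : ℕ} {p : ℕ × ℕ} :
    p ∈ diagonalCoupling N ↔ p.1 < N ∧ p.1 = p.2 := by
  obtain ⟨i, j⟩ := p
  simp only [diagonalCoupling, List.mem_map, List.mem_range, Prod.mk.injEq]
  constructor
  · rintro ⟨k, hk, rfl, rfl⟩; exact ⟨hk, rfl⟩
  · rintro ⟨hi, rfl⟩; exact ⟨i, hi, rfl, rfl⟩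

theorem isCoupling_diagonalCoupling :
    ∀ N : ℕ, IsCoupling (N + 1) (N + 1) (diagonalCoupling (N + 1))
  | 0 => ⟨rfl, rfl, by simp [diagonalCoupling], .singleton _⟩
  | N + 1 => by
    rw [diagonalCoupling, List.range_succ, List.map_append]
    exact (isCoupling_diagonalCoupling N).concat (Or.inr (Or.inr rfl))

theorem warpCount_diagonalCoupling (N : ℕ) : warpCount (diagonalCoupling N) = 0 := by
  simp only [warpCount, List.countP_eq_zero, mem_diagonalCoupling, decide_eq_true_eq]
  omega

theorem IsCoupling.eq_diagonalCoupling_of_warpCount_eq_zero {N M : ℕ} {C : List (ℕ × ℕ)}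
    (hC : IsCoupling N M C) (hw : warpCount C = 0) : N = M ∧ C = diagonalCoupling N := by
  obtain ⟨hhead, hlast, hbound, hchain⟩ := hC
  have hnowarp : ∀ p ∈ C, (p.1, p.2 + 1) ∉ C ∧ (p.1 + 1, p.2) ∉ C := by
    simpa [warpCount, List.countP_eq_zero, not_or] using hw
  have hdiag : C.IsChain fun p q => Prod.map Nat.succ Nat.succ p = q := by
    refine hchain.imp_of_mem_imp fun p q hp hq hpq => ?_
    rcases hpq with rfl | rfl | rfl
    · exact absurd hq (hnowarp p hp).2
    · exact absurd hq (hnowarp p hp).1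
    · rfl
  have hlen : 0 < C.length := List.length_pos_iff.2 (by rintro rfl; simp at hhead)
  have h0 : C[0] = (0, 0) := by
    simpa [List.head?_eq_getElem?, List.getElem?_eq_getElem hlen] using hhead
  have hget (i : ℕ) (hi : i < C.length) : C[i] = (i, i) := by
    rw [← hdiag.iterate_eq_of_apply_eq i hi, h0]
    simp [Nat.succ_iterate]
  rw [List.getLast?_eq_getElem?, List.getElem?_eq_getElem (by omega), hget, Option.some_inj,
    Prod.mk.injEq] at hlast
  have hpos := hbound _ (h0 ▸ List.getElem_mem hlen)
  have hlenN : C.length = N := by omega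
  refine ⟨by omega, List.ext_getElem (by simp [diagonalCoupling, hlenN]) fun i hi _ => ?_⟩
  simp [diagonalCoupling, hget]

section Cost

variable {α : Type*} [MetricSpace α] [Inhabited α]

def fpdtwCost (ρ : ℝ) (X Y : List α) (C : List (ℕ × ℕ)) : ℝ :=
  (C.map fun p => dist (X.getI p.1) (Y.getI p.2)).sum + ρ * (warpCount C : ℝ)

theorem dFPDTW_eq_sInf_image (ρ : ℝ) (X Y : List α) :
    dFPDTW ρ X Y = sInf (fpdtwCost ρ X Y '' {C | IsCoupling X.length Y.length C}) := by
  simp only [dFPDTW, fpdtwCost, Set.image, Set.mem_ofPred_eq, eq_comm]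

theorem nonneg_of_mem_map_dist {X Y : List α} {C : List (ℕ × ℕ)} :
    ∀ d ∈ C.map (fun p => dist (X.getI p.1) (Y.getI p.2)), 0 ≤ d := by
  simp only [List.mem_map]
  rintro _ ⟨p, -, rfl⟩
  exact dist_nonneg

theorem sum_dist_nonneg (X Y : List α) (C : List (ℕ × ℕ)) :
    0 ≤ (C.map fun p => dist (X.getI p.1) (Y.getI p.2)).sum :=
  List.sum_nonneg nonneg_of_mem_map_dist

theorem dist_le_fpdtwCost {ρ : ℝ} (hρ : 0 ≤ ρ) {X Y : List α} {C : List (ℕ × ℕ)}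
    {p : ℕ × ℕ} (hp : p ∈ C) : dist (X.getI p.1) (Y.getI p.2) ≤ fpdtwCost ρ X Y C := by
  calc dist (X.getI p.1) (Y.getI p.2)
      ≤ (C.map fun p => dist (X.getI p.1) (Y.getI p.2)).sum :=
        List.single_le_sum nonneg_of_mem_map_dist _ (List.mem_map_of_mem hp)
    _ ≤ fpdtwCost ρ X Y C := le_add_of_nonneg_right (by positivity)

theorem le_fpdtwCost_of_warpCount_ne_zero {ρ : ℝ} (hρ : 0 ≤ ρ) (X Y : List α)
    {C : List (ℕ × ℕ)} (hw : warpCount C ≠ 0) : ρ ≤ fpdtwCost ρ X Y C := by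
  calc ρ ≤ ρ * (warpCount C : ℝ) :=
        le_mul_of_one_le_right hρ (by exact_mod_cast Nat.one_le_iff_ne_zero.2 hw)
    _ ≤ fpdtwCost ρ X Y C := le_add_of_nonneg_left (sum_dist_nonneg X Y C)

theorem fpdtwCost_diagonalCoupling_self (ρ : ℝ) (X : List α) (N : ℕ) :
    fpdtwCost ρ X X (diagonalCoupling N) = 0 := by
  rw [fpdtwCost, warpCount_diagonalCoupling]
  simp [diagonalCoupling, Function.comp_def]

theorem fpdtwCost_nonneg {ρ : ℝ} (hρ : 0 ≤ ρ) (X Y : List α) (C : List (ℕ × ℕ)) :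
    0 ≤ fpdtwCost ρ X Y C :=
  add_nonneg (sum_dist_nonneg X Y C) (by positivity)

theorem dFPDTW_self {ρ : ℝ} (hρ : 0 ≤ ρ) {X : List α} (hX : X ≠ []) :
    dFPDTW ρ X X = 0 := by
  obtain ⟨N, hN⟩ := Nat.exists_eq_add_one.2 (List.length_pos_iff.2 hX)
  have hcost : ∀ c ∈ fpdtwCost ρ X X '' {C | IsCoupling X.length X.length C}, 0 ≤ c :=
    Set.forall_mem_image.2 fun C _ => fpdtwCost_nonneg hρ X X C
  rw [dFPDTW_eq_sInf_image]
  refine le_antisymm ?_ (Real.sInf_nonneg hcost)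
  rw [← fpdtwCost_diagonalCoupling_self ρ X (N + 1)]
  refine csInf_le ⟨0, hcost⟩ (Set.mem_image_of_mem _ ?_)
  show IsCoupling _ _ _
  rw [hN]
  exact isCoupling_diagonalCoupling N

theorem dFPDTW_pos {ρ : ℝ} (hρ : 0 < ρ) {X Y : List α} (hX : X ≠ []) (hY : Y ≠ [])
    (hXY : X ≠ Y) : 0 < dFPDTW ρ X Y := by
  obtain ⟨N, hN⟩ := Nat.exists_eq_add_one.2 (List.length_pos_iff.2 hX)
  obtain ⟨M, hM⟩ := Nat.exists_eq_add_one.2 (List.length_pos_iff.2 hY)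
  obtain ⟨C₀, hC₀⟩ : ∃ C, IsCoupling X.length Y.length C :=
    hN ▸ hM ▸ exists_isCoupling N M
  suffices ∃ ε > 0, ∀ C, IsCoupling X.length Y.length C → ε ≤ fpdtwCost ρ X Y C by
    obtain ⟨ε, hε, hle⟩ := this
    rw [dFPDTW_eq_sInf_image]
    exact hε.trans_le (le_csInf ⟨_, Set.mem_image_of_mem _ hC₀⟩ (Set.forall_mem_image.2 hle))
  by_cases hlen : X.length = Y.length
  · obtain ⟨k, hk, hne⟩ : ∃ k < X.length, X.getI k ≠ Y.getI k := by
      by_contra! h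
      exact hXY (List.ext_getElem hlen fun k hkX hkY => by
        simpa [List.getI_eq_getElem _ hkX, List.getI_eq_getElem _ hkY] using h k hkX)
    refine ⟨min ρ (dist (X.getI k) (Y.getI k)), lt_min hρ (dist_pos.2 hne), fun C hC => ?_⟩
    rcases eq_or_ne (warpCount C) 0 with hw | hw
    · obtain ⟨-, rfl⟩ := hC.eq_diagonalCoupling_of_warpCount_eq_zero hw
      exact (min_le_right _ _).trans
        (dist_le_fpdtwCost (p := (k, k)) hρ.le (mem_diagonalCoupling.2 ⟨hk, rfl⟩))
    · exact (min_le_left _ _).trans (le_fpdtwCost_of_warpCount_ne_zero hρ.le X Y hw)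
  · exact ⟨ρ, hρ, fun C hC => le_fpdtwCost_of_warpCount_ne_zero hρ.le X Y
      fun hw => hlen (hC.eq_diagonalCoupling_of_warpCount_eq_zero hw).1⟩

end Cost

/-- The fixed-penalty DTW distance satisfies the identity of indiscernibles. -/
theorem dFPDTW_eq_zero_iff {α : Type*} [MetricSpace α] [Inhabited α] (ρ : ℝ)
    (hρ : 0 < ρ) (X Y : List α) (hX : X ≠ []) (hY : Y ≠ []) :
    dFPDTW ρ X Y = 0 ↔ X = Y := by
  refine ⟨fun h => ?_, fun h => h ▸ dFPDTW_self hρ.le hX⟩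
  by_contra hXY
  exact (dFPDTW_pos hρ hX hY hXY).ne' h
end
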